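/- arXiv:2408.10471 — 3 statements merged into one kernel-verified Lean document; each statement's English description precedes it below -/
import Mathlib

section
/- If H is an n×n complex Hadamard matrix in dephased form, then √n is an eigenvalue of H with eigenvector v₁ = (1+√n, 1, 1, ..., 1)ᵀ, i.e., H v₁ = √n v₁. -/
open Matrix Complex

def IsCHM {n : ℕ} (H : Matrix (Fin n) (Fin n) ℂ) : Prop :=
  (∀ i j, ‖H i j‖ = 1) ∧ H * H.conjTranspose = (n : ℂ) • 1

def IsDephased {n : ℕ} [NeZero n] (H : Matrix (Fin n) (Fin n) ℂ) : Prop :=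
  (∀ j, H 0 j = 1) ∧ (∀ i, H i 0 = 1)

theorem sqrt_n_eigenvalue {n : ℕ} [NeZero n] (H : Matrix (Fin n) (Fin n) ℂ)
    (hH : IsCHM H) (hD : IsDephased H)
    (v₁ : Fin n → ℂ) (hv₁ : v₁ = fun i => if i = 0 then 1 + (Real.sqrt n : ℂ) else 1) :
    H.mulVec v₁ = (Real.sqrt n : ℂ) • v₁ := by
  set s : ℂ := (Real.sqrt n : ℂ) with hs
  have hrow : ∀ i, ∑ j, H i j = if i = 0 then (n : ℂ) else 0 := by
    intro i
    have h1 : (H * H.conjTranspose) i 0 = ∑ j, H i j := by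
      simp [Matrix.mul_apply, Matrix.conjTranspose_apply, hD.1]
    have h2 : (H * H.conjTranspose) i 0 = if i = 0 then (n : ℂ) else 0 := by
      rw [hH.2]
      simp [Matrix.one_apply]
    rw [← h1, h2]
  have hsq : s * s = (n : ℂ) := by
    rw [hs, ← Complex.ofReal_mul, Real.mul_self_sqrt (Nat.cast_nonneg n)]; simp
  funext i
  simp only [Matrix.mulVec, dotProduct, hv₁, Pi.smul_apply, smul_eq_mul]
  have key : ∀ j, H i j * (if j = 0 then 1 + s else 1)
      = H i j + (if j = 0 then s * H i j else 0) := by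
    intro j; split <;> ring
  rw [Finset.sum_congr rfl (fun j _ => key j), Finset.sum_add_distrib,
    Finset.sum_ite_eq' Finset.univ 0 (fun j => s * H i j), hrow i]
  simp only [Finset.mem_univ, if_true, hD.2 i, mul_one]
  by_cases h : i = 0 <;> simp [h] <;> rw [← hsq] <;> ring
end

section
/- Let H be an n×n complex Hadamard matrix in dephased form. If λ ≠ √n and λ ≠ −√n is an eigenvalue of H with eigenvector v = (x₁, ..., xₙ)ᵀ, then x₁ = 0. -/
open Matrix Complex

theorem eigvec_first_coord_zero {n : ℕ} [NeZero n] (H : Matrix (Fin n) (Fin n) ℂ)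
    (hH : IsCHM H) (hD : IsDephased H) (lam : ℂ)
    (h1 : lam ≠ (Real.sqrt n : ℂ)) (h2 : lam ≠ (-(Real.sqrt n) : ℂ))
    (v : Fin n → ℂ) (hv : v ≠ 0) (heig : H.mulVec v = lam • v) :
    v 0 = 0 := by
  obtain ⟨habs, hHH⟩ := hH
  obtain ⟨hrow, hcol⟩ := hD
  set s : ℂ := ((Real.sqrt n : ℝ) : ℂ) with hs
  have hn0 : (n : ℂ) ≠ 0 := Nat.cast_ne_zero.mpr (NeZero.ne n)
  have hnpos : (0 : ℝ) < (n : ℝ) := by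
    exact_mod_cast Nat.pos_of_ne_zero (NeZero.ne n)
  have hsR : (0 : ℝ) < Real.sqrt n := Real.sqrt_pos.mpr hnpos
  have hs0 : s ≠ 0 := by
    simp only [hs, ne_eq, Complex.ofReal_eq_zero]
    exact ne_of_gt hsR
  -- Hᴴ * H = n • 1
  have hinv : H * ((n : ℂ)⁻¹ • H.conjTranspose) = 1 := by
    rw [Matrix.mul_smul, hHH, smul_smul, inv_mul_cancel₀ hn0, one_smul]
  have hinv' : ((n : ℂ)⁻¹ • H.conjTranspose) * H = 1 := mul_eq_one_comm.mp hinv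
  have hHH' : H.conjTranspose * H = (n : ℂ) • 1 := by
    have := congrArg (fun M => (n : ℂ) • M) hinv'
    simpa [Matrix.smul_mul, smul_smul, mul_inv_cancel₀ hn0] using this
  -- column sums
  have hcolsum : ∀ j, ∑ i, H i j = if j = 0 then (n : ℂ) else 0 := by
    intro j
    have h := congrFun (congrFun hHH' 0) j
    simp only [Matrix.mul_apply, Matrix.conjTranspose_apply, hcol, star_one, one_mul,
      Matrix.smul_apply, Matrix.one_apply, smul_eq_mul] at h
    rw [h]
    by_cases hj : j = 0 <;> simp [hj, eq_comm]
  -- left eigenvectors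
  have key : ∀ (t : ℂ), (Matrix.vecMul (fun i => if i = 0 then 1 + t else 1) H)
      = (fun j => (if j = 0 then (n : ℂ) else 0) + t) := by
    intro t
    funext j
    simp only [Matrix.vecMul, dotProduct]
    have : ∀ i, (if i = 0 then 1 + t else 1) * H i j
        = H i j + (if i = 0 then t * H i j else 0) := by
      intro i
      by_cases hi : i = 0 <;> simp [hi] <;> ring
    rw [Finset.sum_congr rfl (fun i _ => this i), Finset.sum_add_distrib,
      Finset.sum_ite_eq' Finset.univ (0 : Fin n) (fun i => t * H i j)]
    simp [hcolsum j, hrow j]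
  have dot_zero : ∀ (t μ : ℂ), μ * μ = (n : ℂ) → lam ≠ μ →
      (Matrix.vecMul (fun i => if i = 0 then 1 + (μ : ℂ) else 1) H
        = μ • (fun i => if i = 0 then 1 + μ else 1)) →
      dotProduct (fun i => if i = 0 then 1 + μ else 1) v = 0 := by
    intro t μ hμ2 hlamμ hleft
    have e1 : dotProduct (fun i => if i = 0 then 1 + μ else 1) (H.mulVec v)
        = μ * dotProduct (fun i => if i = 0 then 1 + μ else 1) v := by
      rw [Matrix.dotProduct_mulVec, hleft, smul_dotProduct, smul_eq_mul]
    have e2 : dotProduct (fun i => if i = 0 then 1 + μ else 1) (H.mulVec v)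
        = lam * dotProduct (fun i => if i = 0 then 1 + μ else 1) v := by
      rw [heig, dotProduct_smul, smul_eq_mul]
    have : (lam - μ) * dotProduct (fun i => if i = 0 then 1 + μ else 1) v = 0 := by
      rw [sub_mul, ← e1, ← e2, sub_self]
    exact (mul_eq_zero.mp this).resolve_left (sub_ne_zero.mpr hlamμ)
  have hs2 : s * s = (n : ℂ) := by
    rw [hs]
    push_cast [← Complex.ofReal_mul, Real.mul_self_sqrt (le_of_lt hnpos)]
    simp
  have left1 : Matrix.vecMul (fun i => if i = 0 then 1 + s else 1) H
      = s • (fun i => if i = 0 then 1 + s else 1) := by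
    rw [key s]
    funext j
    by_cases hj : j = 0 <;> simp [hj, smul_eq_mul]
    linear_combination -hs2
  have left2 : Matrix.vecMul (fun i => if i = 0 then 1 + (-s) else 1) H
      = (-s) • (fun i => if i = 0 then 1 + (-s) else 1) := by
    rw [key (-s)]
    funext j
    by_cases hj : j = 0 <;> simp [hj, smul_eq_mul]
    linear_combination -hs2
  have d1 := dot_zero s s hs2 h1 left1
  have d2 := dot_zero (-s) (-s) (by rw [neg_mul_neg]; exact hs2) h2 left2
  -- subtract
  have hsub : dotProduct (fun i => if i = 0 then 1 + s else 1) v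
      - dotProduct (fun i => if i = 0 then 1 + (-s) else 1) v
      = 2 * s * v 0 := by
    simp only [dotProduct, ← Finset.sum_sub_distrib]
    have : ∀ i, (if i = 0 then 1 + s else 1) * v i - (if i = 0 then 1 + (-s) else 1) * v i
        = if i = 0 then 2 * s * v i else 0 := by
      intro i
      by_cases hi : i = 0 <;> simp [hi] <;> ring
    rw [Finset.sum_congr rfl (fun i _ => this i),
      Finset.sum_ite_eq' Finset.univ (0 : Fin n) (fun i => 2 * s * v i)]
    simp
  rw [d1, d2, sub_zero] at hsub
  have := hsub.symm
  rcases mul_eq_zero.mp this with h | h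
  · exact absurd h (by simp [hs0])
  · exact h
end

section
/- No 6×6 complex Hadamard matrix contains a 3×3 submatrix of rank one. -/
open Matrix Complex

private lemma unit_eq_one {u : ℂ} (hu : ‖u‖ = 1) (hre : u.re = 1) : u = 1 := by
  have h1 : u.re ^ 2 + u.im ^ 2 = 1 := by
    have := Complex.sq_norm u
    rw [hu] at this
    simpa [Complex.normSq_apply, sq] using this.symm
  have him : u.im = 0 := by nlinarith
  exact Complex.ext (by simp [hre]) (by simp [him])

private lemma unit_sum3 {a b c σ : ℂ} (ha : ‖a‖ = 1) (hb : ‖b‖ = 1)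
    (hc : ‖c‖ = 1) (hσ : ‖σ‖ = 1) (h : a + b + c = 3 * σ) :
    a = σ ∧ b = σ ∧ c = σ := by
  have hσc : σ * (starRingEnd ℂ) σ = 1 := by
    rw [Complex.mul_conj]
    norm_cast
    rw [← Complex.sq_norm, hσ]; norm_num
  set u := a * (starRingEnd ℂ) σ with hu
  set v := b * (starRingEnd ℂ) σ with hv
  set w := c * (starRingEnd ℂ) σ with hw
  have hsum : u + v + w = 3 := by
    rw [hu, hv, hw, ← add_mul, ← add_mul, h, mul_assoc, hσc, mul_one]
  have habs : ∀ z : ℂ, ‖z‖ = 1 → ‖z * (starRingEnd ℂ) σ‖ = 1 := by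
    intro z hz
    rw [norm_mul, hz, Complex.norm_conj, hσ, one_mul]
  have hua := habs a ha; have hvb := habs b hb; have hwc := habs c hc
  rw [← hu] at hua; rw [← hv] at hvb; rw [← hw] at hwc
  have hre : u.re + v.re + w.re = 3 := by
    have := congrArg Complex.re hsum
    simpa using this
  have h1 : u.re ≤ 1 := (Complex.re_le_norm u).trans (le_of_eq hua)
  have h2 : v.re ≤ 1 := (Complex.re_le_norm v).trans (le_of_eq hvb)
  have h3 : w.re ≤ 1 := (Complex.re_le_norm w).trans (le_of_eq hwc)
  have hu1 : u = 1 := unit_eq_one hua (by linarith)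
  have hv1 : v = 1 := unit_eq_one hvb (by linarith)
  have hw1 : w = 1 := unit_eq_one hwc (by linarith)
  refine ⟨?_, ?_, ?_⟩
  · calc a = a * ((starRingEnd ℂ) σ * σ) := by rw [mul_comm ((starRingEnd ℂ) σ), hσc, mul_one]
    _ = u * σ := by rw [hu]; ring
    _ = σ := by rw [hu1, one_mul]
  · calc b = b * ((starRingEnd ℂ) σ * σ) := by rw [mul_comm ((starRingEnd ℂ) σ), hσc, mul_one]
    _ = v * σ := by rw [hv]; ring
    _ = σ := by rw [hv1, one_mul]
  · calc c = c * ((starRingEnd ℂ) σ * σ) := by rw [mul_comm ((starRingEnd ℂ) σ), hσc, mul_one]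
    _ = w * σ := by rw [hw]; ring
    _ = σ := by rw [hw1, one_mul]

/-- Key step: if row `q` restricted to the columns `c` is `ρ` times row `p`, then for any
column `d` outside the range of `c`, we have `H p d * conj (H q d) = -conj ρ`. -/
private lemma pair_eq (H : Matrix (Fin 6) (Fin 6) ℂ) (hH : IsCHM H)
    (c : Fin 3 → Fin 6) (hc : Function.Injective c) (p q : Fin 6) (hpq : p ≠ q)
    (ρ : ℂ) (hρ : ‖ρ‖ = 1)
    (hprop : ∀ i : Fin 3, H q (c i) = ρ * H p (c i))
    (d : Fin 6) (hd : d ∈ (Finset.image c Finset.univ)ᶜ) :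
    H p d * (starRingEnd ℂ) (H q d) = -(starRingEnd ℂ) ρ := by
  obtain ⟨habs, horth⟩ := hH
  -- orthogonality of rows p and q
  have h0 : ∑ j : Fin 6, H p j * (starRingEnd ℂ) (H q j) = 0 := by
    have := congrFun (congrFun horth p) q
    rw [Matrix.mul_apply] at this
    simp only [Matrix.conjTranspose_apply, Matrix.smul_apply, Matrix.one_apply_ne hpq,
      smul_zero] at this
    simpa [Matrix.conjTranspose_apply] using this
  set f : Fin 6 → ℂ := fun j => H p j * (starRingEnd ℂ) (H q j) with hf
  have habsf : ∀ j, ‖f j‖ = 1 := by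
    intro j
    rw [hf]
    simp [norm_mul, Complex.norm_conj, habs]
  set T := Finset.image c Finset.univ with hT
  have hsplit : ∑ j ∈ T, f j + ∑ j ∈ Tᶜ, f j = 0 := by
    rw [Finset.sum_add_sum_compl]; exact h0
  have hTsum : ∑ j ∈ T, f j = 3 * (starRingEnd ℂ) ρ := by
    rw [hT, Finset.sum_image (fun a _ b _ h => hc h)]
    have : ∀ i : Fin 3, f (c i) = (starRingEnd ℂ) ρ := by
      intro i
      rw [hf]
      simp only [hprop i, _root_.map_mul]
      have : H p (c i) * (starRingEnd ℂ) (H p (c i)) = 1 := by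
        rw [Complex.mul_conj]
        norm_cast
        rw [← Complex.sq_norm, habs]; norm_num
      calc H p (c i) * ((starRingEnd ℂ) ρ * (starRingEnd ℂ) (H p (c i)))
          = (starRingEnd ℂ) ρ * (H p (c i) * (starRingEnd ℂ) (H p (c i))) := by ring
        _ = (starRingEnd ℂ) ρ := by rw [this, mul_one]
    rw [Finset.sum_congr rfl fun i _ => this i]
    simp [Finset.card_univ]
  have hcard : Tᶜ.card = 3 := by
    rw [Finset.card_compl, hT, Finset.card_image_of_injective _ hc]
    simp
  obtain ⟨d1, d2, d3, h12, h13, h23, hD⟩ := Finset.card_eq_three.mp hcard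
  have hCsum : f d1 + f d2 + f d3 = 3 * (-(starRingEnd ℂ) ρ) := by
    have : ∑ j ∈ Tᶜ, f j = -(3 * (starRingEnd ℂ) ρ) := by
      have := hsplit
      rw [hTsum] at this
      linear_combination this
    rw [hD] at this
    rw [Finset.sum_insert (by simp [h12, h13]), Finset.sum_insert (by simp [h23]),
      Finset.sum_singleton] at this
    rw [← add_assoc] at this
    rw [this]; ring
  have hσ : ‖-(starRingEnd ℂ) ρ‖ = 1 := by
    rw [norm_neg, Complex.norm_conj, hρ]
  obtain ⟨e1, e2, e3⟩ := unit_sum3 (habsf d1) (habsf d2) (habsf d3) hσ hCsum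
  rw [hD] at hd
  simp only [Finset.mem_insert, Finset.mem_singleton] at hd
  rcases hd with rfl | rfl | rfl
  · exact e1
  · exact e2
  · exact e3

/-- No 6×6 CHM contains a 3×3 submatrix of rank one. -/
theorem no_three_by_three_rank_one_submatrix :
    ¬ ∃ (H : Matrix (Fin 6) (Fin 6) ℂ) (r c : Fin 3 → Fin 6),
      IsCHM H ∧ StrictMono r ∧ StrictMono c ∧
      (Matrix.of fun i j => H (r i) (c j)).rank = 1 := by
  rintro ⟨H, r, c, hH, hr, hc, hrank⟩
  have hrinj := hr.injective
  have hcinj := hc.injective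
  set S : Matrix (Fin 3) (Fin 3) ℂ := Matrix.of fun i j => H (r i) (c j) with hS
  -- all entries of S are unimodular, hence nonzero
  have hSabs : ∀ i j, ‖S i j‖ = 1 := fun i j => hH.1 _ _
  have hSne : ∀ i j, S i j ≠ 0 := by
    intro i j h
    have := hSabs i j
    rw [h] at this
    simp at this
  -- rank one gives vanishing 2×2 minors
  have hminor : ∀ i i' j j', S i j * S i' j' = S i j' * S i' j := by
    have hfr : Module.finrank ℂ (LinearMap.range S.mulVecLin) = 1 := hrank
    obtain ⟨v, -, hv⟩ := finrank_eq_one_iff'.mp hfr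
    have hcol : ∀ j : Fin 3, ∃ a : ℂ, ∀ i, S i j = a * (v : Fin 3 → ℂ) i := by
      intro j
      have hmem : S.mulVec (Pi.single j 1) ∈ LinearMap.range S.mulVecLin :=
        ⟨Pi.single j 1, rfl⟩
      obtain ⟨a, ha⟩ := hv ⟨_, hmem⟩
      refine ⟨a, fun i => ?_⟩
      have := congrFun (congrArg (Subtype.val) ha) i
      simp only [SetLike.val_smul, Pi.smul_apply, smul_eq_mul] at this
      rw [this]
      simp [Matrix.mulVec_single]
    intro i i' j j'
    obtain ⟨a, ha⟩ := hcol j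
    obtain ⟨a', ha'⟩ := hcol j'
    rw [ha, ha', ha, ha']
    ring
  -- ratios
  set ρ1 : ℂ := S 1 0 / S 0 0 with hρ1
  set ρ2 : ℂ := S 2 0 / S 0 0 with hρ2
  set ρ3 : ℂ := S 2 0 / S 1 0 with hρ3
  have habsρ : ∀ i i' : Fin 3, ‖S i 0 / S i' 0‖ = 1 := by
    intro i i'
    rw [norm_div, hSabs, hSabs]; norm_num
  have hprop1 : ∀ i : Fin 3, H (r 1) (c i) = ρ1 * H (r 0) (c i) := by
    intro i
    have := hminor 1 0 0 i
    have h00 := hSne 0 0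
    show S 1 i = ρ1 * S 0 i
    rw [hρ1]
    field_simp
    linear_combination -this
  have hprop2 : ∀ i : Fin 3, H (r 2) (c i) = ρ2 * H (r 0) (c i) := by
    intro i
    have := hminor 2 0 0 i
    have h00 := hSne 0 0
    show S 2 i = ρ2 * S 0 i
    rw [hρ2]
    field_simp
    linear_combination -this
  have hprop3 : ∀ i : Fin 3, H (r 2) (c i) = ρ3 * H (r 1) (c i) := by
    intro i
    have := hminor 2 1 0 i
    have h10 := hSne 1 0
    show S 2 i = ρ3 * S 1 i
    rw [hρ3]
    field_simp
    linear_combination -this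
  -- pick a column outside the range of c
  have hcard : ((Finset.image c Finset.univ)ᶜ : Finset (Fin 6)).card = 3 := by
    rw [Finset.card_compl, Finset.card_image_of_injective _ hcinj]
    simp
  obtain ⟨d, hd⟩ := Finset.card_pos.mp (by rw [hcard]; norm_num)
  have hrne : ∀ p q : Fin 3, p ≠ q → r p ≠ r q := fun p q h hh => h (hrinj hh)
  have e1 := pair_eq H hH c hcinj (r 0) (r 1) (hrne 0 1 (by decide)) ρ1
    (habsρ 1 0) hprop1 d hd
  have e2 := pair_eq H hH c hcinj (r 0) (r 2) (hrne 0 2 (by decide)) ρ2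
    (habsρ 2 0) hprop2 d hd
  have e3 := pair_eq H hH c hcinj (r 1) (r 2) (hrne 1 2 (by decide)) ρ3
    (habsρ 2 1) hprop3 d hd
  -- derive contradiction
  set A := H (r 0) d
  set B := H (r 1) d
  set C := H (r 2) d
  have hA : A * (starRingEnd ℂ) A = 1 := by
    rw [Complex.mul_conj]
    norm_cast
    rw [← Complex.sq_norm, hH.1]; norm_num
  have hρ12 : ρ2 = ρ1 * ρ3 := by
    have h00 := hSne 0 0
    have h10 := hSne 1 0
    rw [hρ1, hρ2, hρ3]
    field_simp
  have hρ1c : ρ1 * (starRingEnd ℂ) ρ1 = 1 := by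
    rw [Complex.mul_conj]
    norm_cast
    rw [← Complex.sq_norm, hρ1, habsρ 1 0]; norm_num
  -- B * conj C = conj(A conj B) * (A conj C) since |A| = 1
  have key : B * (starRingEnd ℂ) C =
      (starRingEnd ℂ) (A * (starRingEnd ℂ) B) * (A * (starRingEnd ℂ) C) := by
    rw [_root_.map_mul, Complex.conj_conj]
    calc B * (starRingEnd ℂ) C
        = (A * (starRingEnd ℂ) A) * (B * (starRingEnd ℂ) C) := by rw [hA, one_mul]
      _ = (starRingEnd ℂ) A * B * (A * (starRingEnd ℂ) C) := by ring
  rw [e1, e2, e3] at key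
  -- key : -conj ρ3 = conj(-conj ρ1) * (-conj ρ2)
  rw [map_neg, Complex.conj_conj] at key
  have : -(starRingEnd ℂ) ρ3 = ρ1 * (starRingEnd ℂ) ρ2 := by
    rw [key]; ring
  rw [hρ12, _root_.map_mul] at this
  have hcρ3 : (starRingEnd ℂ) ρ3 = 0 := by
    have h2 : ρ1 * ((starRingEnd ℂ) ρ1 * (starRingEnd ℂ) ρ3) = (starRingEnd ℂ) ρ3 := by
      rw [← mul_assoc, hρ1c, one_mul]
    rw [h2] at this
    have h5 : (2 : ℂ) * (starRingEnd ℂ) ρ3 = 0 := by linear_combination -this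
    simpa using h5
  have hρ3z : ρ3 = 0 := by
    have := congrArg (starRingEnd ℂ) hcρ3
    simpa using this
  have habs3 := habsρ 2 1
  rw [← hρ3, hρ3z] at habs3
  norm_num at habs3
end
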